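/- Let G be an HG-matrix, x ∈ F_2^s, and let P be a good-path in G_x(G) between columns g_{r1} and g_{r2} that are not a pair, with r1 ∈ {2i, 2i+1} and r2 ∈ {2j, 2j+1}, i ≠ j. Let G′ be obtained by adding x to every column on P. Then g′_{2p} + g′_{2p+1} = g_{2p} + g_{2p+1} + x for p ∈ {i, j}, and g′_{2p} + g′_{2p+1} = g_{2p} + g_{2p+1} for all p ∉ {i, j}. -/

import Mathlib

/-!
Edge types alternate starting and ending with an `x`-type edge, so the path has an even number
of vertices and its pair-type edges join vertices `2k-1` and `2k`. Hence every interior vertex of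
the path has its pair-mate on the path, again as an interior vertex, while the mate of an
endpoint is not on the path, since that would make the endpoint the mate of an interior vertex.
Columns of a pair `p ∉ {i, j}` are therefore shifted together or not at all, and `x + x = 0`;
of the pairs `i` and `j` exactly one column is shifted.
-/

/-- A good-path in the `x`-type graph `G_x(G)` of an HG-matrix `G` (columns indexed by
`Fin (2^s)`, pairs being the columns `2t` and `2t+1`, i.e. columns with equal `·/2`).
It is a simple path `g_{s_0} − ⋯ − g_{s_{len−1}}` on the columns, whose edges carry
alternating types (`true` = `x`-type edge `{g, g+x}`, `false` = pair-type edge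
`{g_{2t}, g_{2t+1}}`), with both the first and the last edge of `x`-type. -/
structure GoodPath (s : ℕ) (G : Fin (2 ^ s) → Fin s → ZMod 2)
    (x : Fin s → ZMod 2) where
  /-- number of vertices on the path -/
  len : ℕ
  two_le : 2 ≤ len
  /-- the column indices `s_0, …, s_{len-1}` of the vertices along the path -/
  idx : ℕ → Fin (2 ^ s)
  /-- the path is simple -/
  inj : ∀ ⦃j k⦄, j < len → k < len → idx j = idx k → j = k
  /-- the type of each edge: `true` for `x`-type, `false` for pair-type -/
  ty : ℕ → Bool
  /-- edge types alternate along the path -/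
  alt : ∀ j, j + 2 < len → ty (j + 1) = !ty j
  /-- the first edge is an `x`-type edge -/
  first : ty 0 = true
  /-- the last edge is an `x`-type edge -/
  last : ty (len - 2) = true
  /-- an `x`-type edge joins `g` to `g + x` -/
  xedge : ∀ j, j + 1 < len → ty j = true → G (idx (j + 1)) = G (idx j) + x
  /-- a pair-type edge joins the two distinct columns `2t` and `2t+1` -/
  pedge : ∀ j, j + 1 < len → ty j = false →
    (idx j).val / 2 = (idx (j + 1)).val / 2 ∧ idx j ≠ idx (j + 1)

section ShiftSum

variable {p q : Prop} [Decidable p] [Decidable q]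

lemma ite_add_ite_add_of_iff {M : Type*} [AddCommGroup M] [Module (ZMod 2) M] (x a b : M)
    (h : p ↔ q) : (if p then a + x else a) + (if q then b + x else b) = a + b := by
  by_cases hp : p
  · rw [if_pos hp, if_pos (h.mp hp), add_add_add_comm, ZModModule.add_self, add_zero]
  · rw [if_neg hp, if_neg (mt h.mpr hp)]

lemma ite_add_ite_add_of_xor {M : Type*} [AddCommSemigroup M] (x a b : M) (h : Xor p q) :
    (if p then a + x else a) + (if q then b + x else b) = a + b + x := by
  rcases h with ⟨hp, hq⟩ | ⟨hq, hp⟩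
  · rw [if_pos hp, if_neg hq, add_right_comm]
  · rw [if_neg hp, if_pos hq, add_assoc]

end ShiftSum

lemma Fin.eq_of_div_two_eq_of_ne {n : ℕ} {a b c : Fin n} (ha : a.val / 2 = c.val / 2)
    (hb : b.val / 2 = c.val / 2) (hac : a ≠ c) (hbc : b ≠ c) : a = b := by
  have hac' : a.val ≠ c.val := Fin.val_ne_of_ne hac
  have hbc' : b.val ≠ c.val := Fin.val_ne_of_ne hbc
  ext
  omega

namespace GoodPath

variable {s : ℕ} {G : Fin (2 ^ s) → Fin s → ZMod 2} {x : Fin s → ZMod 2}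
  (P : GoodPath s G x)

def Mem (c : Fin (2 ^ s)) : Prop := ∃ m, m < P.len ∧ P.idx m = c

lemma ty_eq_true_iff : ∀ {k}, k + 2 ≤ P.len → (P.ty k = true ↔ Even k)
  | 0, _ => by simp [P.first]
  | k + 1, hk => by
    rw [P.alt k (by omega), Bool.not_eq_true', Nat.even_add_one, ← ty_eq_true_iff (by omega)]
    simp

lemma ty_eq_false_of_odd {k : ℕ} (hk : k + 2 ≤ P.len) (hodd : Odd k) : P.ty k = false := by
  rw [← Bool.not_eq_true, P.ty_eq_true_iff hk, Nat.not_even_iff_odd]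
  exact hodd

lemma even_len : Even P.len := by
  have hlen := P.two_le
  have hlast := (P.ty_eq_true_iff (k := P.len - 2) (by omega)).mp P.last
  rw [← Nat.sub_add_cancel hlen]
  exact hlast.add even_two

lemma exists_interior_mate {m : ℕ} (hm0 : 0 < m) (hm : m + 1 < P.len) :
    ∃ m', 0 < m' ∧ m' + 1 < P.len ∧
      (P.idx m').val / 2 = (P.idx m).val / 2 ∧ P.idx m' ≠ P.idx m := by
  obtain ⟨l, hl⟩ := P.even_len
  rcases Nat.even_or_odd m with ⟨k, hk⟩ | hodd
  · have hedge := P.pedge (m - 1) (by omega) (P.ty_eq_false_of_odd (by omega) ⟨k - 1, by omega⟩)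
    rw [Nat.sub_add_cancel hm0] at hedge
    exact ⟨m - 1, by omega, by omega, hedge.1, hedge.2⟩
  · obtain ⟨k, hk⟩ := hodd
    have hedge := P.pedge m (by omega) (P.ty_eq_false_of_odd (by omega) ⟨k, hk⟩)
    exact ⟨m + 1, by omega, by omega, hedge.1.symm, hedge.2.symm⟩

lemma mem_of_mem_mate {c c' : Fin (2 ^ s)} (hc : P.Mem c) (hmate : c'.val / 2 = c.val / 2)
    (hne : c' ≠ c) (hfirst : c.val / 2 ≠ (P.idx 0).val / 2)
    (hlast : c.val / 2 ≠ (P.idx (P.len - 1)).val / 2) : P.Mem c' := by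
  obtain ⟨m, hm, rfl⟩ := hc
  have hm0 : m ≠ 0 := by rintro rfl; exact hfirst rfl
  have hml : m ≠ P.len - 1 := by rintro rfl; exact hlast rfl
  obtain ⟨m', -, hm', hmate', hne'⟩ := P.exists_interior_mate (m := m) (by omega) (by omega)
  exact ⟨m', by omega, Fin.eq_of_div_two_eq_of_ne hmate' hmate hne' hne⟩

lemma not_mem_mate_of_endpoint {e : ℕ} (he : e = 0 ∨ e = P.len - 1)
    (hends : (P.idx 0).val / 2 ≠ (P.idx (P.len - 1)).val / 2) {c' : Fin (2 ^ s)}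
    (hmate : c'.val / 2 = (P.idx e).val / 2) (hne : c' ≠ P.idx e) : ¬ P.Mem c' := by
  rintro ⟨m, hm, rfl⟩
  have hlen := P.two_le
  have hm0 : m ≠ 0 := by rintro rfl; rcases he with rfl | rfl <;> omega
  have hml : m ≠ P.len - 1 := by rintro rfl; rcases he with rfl | rfl <;> omega
  obtain ⟨m', hm'0, hm', hmate', hne'⟩ := P.exists_interior_mate (m := m) (by omega) (by omega)
  have h := P.inj (by omega) (by omega)
    (Fin.eq_of_div_two_eq_of_ne hmate' hmate.symm hne' (Ne.symm hne))
  omega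

variable {p : ℕ} {a b : Fin (2 ^ s)} (ha : a.val = 2 * p) (hb : b.val = 2 * p + 1)
include ha hb

lemma xor_mem_of_endpoint_pair (hends : (P.idx 0).val / 2 ≠ (P.idx (P.len - 1)).val / 2)
    (hp : p = (P.idx 0).val / 2 ∨ p = (P.idx (P.len - 1)).val / 2) :
    Xor (P.Mem a) (P.Mem b) := by
  have hlen := P.two_le
  obtain ⟨e, he, hpe⟩ : ∃ e, (e = 0 ∨ e = P.len - 1) ∧ (P.idx e).val / 2 = p := by
    rcases hp with h | h
    exacts [⟨0, .inl rfl, h.symm⟩, ⟨_, .inr rfl, h.symm⟩]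
  have hmem : P.Mem (P.idx e) := ⟨e, by omega, rfl⟩
  have hnot (c : Fin (2 ^ s)) (hc : c.val / 2 = p) (hne : c.val ≠ (P.idx e).val) : ¬ P.Mem c :=
    P.not_mem_mate_of_endpoint he hends (by omega) (Fin.ne_of_val_ne hne)
  rcases (by omega : (P.idx e).val = a.val ∨ (P.idx e).val = b.val) with h | h
  · exact .inl ⟨Fin.ext h ▸ hmem, hnot b (by omega) (by omega)⟩
  · exact .inr ⟨Fin.ext h ▸ hmem, hnot a (by omega) (by omega)⟩

lemma mem_iff_mem_of_not_endpoint_pair (hfirst : p ≠ (P.idx 0).val / 2)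
    (hlast : p ≠ (P.idx (P.len - 1)).val / 2) : P.Mem a ↔ P.Mem b := by
  have hab : a ≠ b := Fin.ne_of_val_ne (by omega)
  exact ⟨fun h => P.mem_of_mem_mate h (by omega) hab.symm (by omega) (by omega),
    fun h => P.mem_of_mem_mate h (by omega) hab (by omega) (by omega)⟩

end GoodPath

open Classical in
theorem reorder_goodPath_pair_sums_general (s : ℕ) (G : Fin (2 ^ s) → Fin s → ZMod 2)
    (x : Fin s → ZMod 2) (P : GoodPath s G x)
    (i j : ℕ) (hij : i ≠ j)
    (h1 : (P.idx 0).val = 2 * i ∨ (P.idx 0).val = 2 * i + 1)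
    (h2 : (P.idx (P.len - 1)).val = 2 * j ∨ (P.idx (P.len - 1)).val = 2 * j + 1)
    (G' : Fin (2 ^ s) → Fin s → ZMod 2)
    (hG' : ∀ c, G' c = if ∃ m, m < P.len ∧ P.idx m = c then G c + x else G c) :
    ∀ p (hp : 2 * p + 1 < 2 ^ s),
      ((p = i ∨ p = j) →
        G' ⟨2 * p, Nat.lt_of_le_of_lt (Nat.le_succ _) hp⟩ + G' ⟨2 * p + 1, hp⟩ =
          G ⟨2 * p, Nat.lt_of_le_of_lt (Nat.le_succ _) hp⟩ + G ⟨2 * p + 1, hp⟩ + x) ∧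
      (p ≠ i → p ≠ j →
        G' ⟨2 * p, Nat.lt_of_le_of_lt (Nat.le_succ _) hp⟩ + G' ⟨2 * p + 1, hp⟩ =
          G ⟨2 * p, Nat.lt_of_le_of_lt (Nat.le_succ _) hp⟩ + G ⟨2 * p + 1, hp⟩) := by
  have hi : (P.idx 0).val / 2 = i := by omega
  have hj : (P.idx (P.len - 1)).val / 2 = j := by omega
  intro p hp
  refine ⟨fun hpij => ?_, fun hpi hpj => ?_⟩
  · rw [hG', hG']
    exact ite_add_ite_add_of_xor _ _ _
      (P.xor_mem_of_endpoint_pair rfl rfl (by omega) (by omega))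
  · rw [hG', hG']
    exact ite_add_ite_add_of_iff _ _ _
      (P.mem_iff_mem_of_not_endpoint_pair rfl rfl (by omega) (by omega))

open Classical in
/-- Let `P` be a good-path in `G_x(G)` between columns `g_{r1}` and `g_{r2}` that are
not a pair, with `r1 ∈ {2i, 2i+1}` and `r2 ∈ {2j, 2j+1}`, `i ≠ j`.  Let `G'` be
obtained from the HG-matrix `G` by adding `x` to every column on `P`.  Then
`g'_{2p} + g'_{2p+1} = g_{2p} + g_{2p+1} + x` for `p ∈ {i, j}`, while
`g'_{2p} + g'_{2p+1} = g_{2p} + g_{2p+1}` for all `p ∉ {i, j}`. -/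
theorem reorder_goodPath_pair_sums (s : ℕ) (G : Fin (2 ^ s) → Fin s → ZMod 2)
    (hG : Function.Bijective G) (x : Fin s → ZMod 2) (P : GoodPath s G x)
    (i j : ℕ) (hij : i ≠ j)
    (h1 : (P.idx 0).val = 2 * i ∨ (P.idx 0).val = 2 * i + 1)
    (h2 : (P.idx (P.len - 1)).val = 2 * j ∨ (P.idx (P.len - 1)).val = 2 * j + 1)
    (G' : Fin (2 ^ s) → Fin s → ZMod 2)
    (hG' : ∀ c, G' c = if ∃ m, m < P.len ∧ P.idx m = c then G c + x else G c) :
    ∀ p (hp : 2 * p + 1 < 2 ^ s),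
      ((p = i ∨ p = j) →
        G' ⟨2 * p, Nat.lt_of_le_of_lt (Nat.le_succ _) hp⟩ + G' ⟨2 * p + 1, hp⟩ =
          G ⟨2 * p, Nat.lt_of_le_of_lt (Nat.le_succ _) hp⟩ + G ⟨2 * p + 1, hp⟩ + x) ∧
      (p ≠ i → p ≠ j →
        G' ⟨2 * p, Nat.lt_of_le_of_lt (Nat.le_succ _) hp⟩ + G' ⟨2 * p + 1, hp⟩ =
          G ⟨2 * p, Nat.lt_of_le_of_lt (Nat.le_succ _) hp⟩ + G ⟨2 * p + 1, hp⟩) :=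
  reorder_goodPath_pair_sums_general s G x P i j hij h1 h2 G' hG'
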